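/- Suppose A is approximately weakly amenable and A is a closed two-sided ideal in its second dual (A**, □) with the first Arens product. Then A is approximately (2n−1)-weakly amenable for every n ∈ ℕ. -/

import Mathlib

open ContinuousLinearMap Filter Topology

open ContinuousLinearMap Filter Topology

/-- A Banach `A`-bimodule: a complete normed `ℂ`-space with commuting continuous
left and right `A`-actions, jointly bounded and bilinear. -/
structure BBimod (A : Type) [NonUnitalNormedRing A] [NormedSpace ℂ A] where
  carrier : Type
  [grp : NormedAddCommGroup carrier]
  [mod : NormedSpace ℂ carrier]
  [complete : CompleteSpace carrier]
  lsmul : A → carrier →L[ℂ] carrier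
  rsmul : A → carrier →L[ℂ] carrier
  lsmul_add : ∀ a b, lsmul (a + b) = lsmul a + lsmul b
  rsmul_add : ∀ a b, rsmul (a + b) = rsmul a + rsmul b
  lsmul_smul : ∀ (c : ℂ) (a), lsmul (c • a) = c • lsmul a
  rsmul_smul : ∀ (c : ℂ) (a), rsmul (c • a) = c • rsmul a
  lsmul_mul : ∀ a b, lsmul (a * b) = (lsmul a).comp (lsmul b)
  rsmul_mul : ∀ a b, rsmul (a * b) = (rsmul b).comp (rsmul a)
  lsmul_rsmul : ∀ a b, (lsmul a).comp (rsmul b) = (rsmul b).comp (lsmul a)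
  bound : ∃ C : ℝ, ∀ a, ‖lsmul a‖ ≤ C * ‖a‖ ∧ ‖rsmul a‖ ≤ C * ‖a‖

attribute [instance] BBimod.grp BBimod.mod BBimod.complete

variable {A : Type} [NonUnitalNormedRing A] [NormedSpace ℂ A]

/-- The dual of a Banach bimodule, with the canonical dual actions
`⟨u, Λ·a⟩ = ⟨a·u, Λ⟩` and `⟨u, a·Λ⟩ = ⟨u·a, Λ⟩`. -/
noncomputable def BBimod.dual (M : BBimod A) : BBimod A where
  carrier := M.carrier →L[ℂ] ℂ
  lsmul a := (compL ℂ M.carrier M.carrier ℂ).flip (M.rsmul a)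
  rsmul a := (compL ℂ M.carrier M.carrier ℂ).flip (M.lsmul a)
  lsmul_add a b := by ext Λ x; simp [M.rsmul_add]
  rsmul_add a b := by ext Λ x; simp [M.lsmul_add]
  lsmul_smul c a := by ext Λ x; simp [M.rsmul_smul]
  rsmul_smul c a := by ext Λ x; simp [M.lsmul_smul]
  lsmul_mul a b := by ext Λ x; simp [M.rsmul_mul]
  rsmul_mul a b := by ext Λ x; simp [M.lsmul_mul]
  lsmul_rsmul a b := by
    ext Λ x
    have h : M.lsmul b (M.rsmul a x) = M.rsmul a (M.lsmul b x) := by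
      have := congrArg (fun T : M.carrier →L[ℂ] M.carrier => T x) (M.lsmul_rsmul b a)
      simpa using this
    simp [h]
  bound := by
    obtain ⟨C, hC⟩ := M.bound
    refine ⟨C, fun a => ⟨?_, ?_⟩⟩
    · refine opNorm_le_bound _ ?_ fun Λ => ?_
      · exact le_trans (norm_nonneg _) (hC a).2
      · calc ‖Λ.comp (M.rsmul a)‖ ≤ ‖Λ‖ * ‖M.rsmul a‖ := opNorm_comp_le _ _
          _ ≤ (C * ‖a‖) * ‖Λ‖ := by
              rw [mul_comm]
              exact mul_le_mul_of_nonneg_right (hC a).2 (norm_nonneg _)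
    · refine opNorm_le_bound _ ?_ fun Λ => ?_
      · exact le_trans (norm_nonneg _) (hC a).1
      · calc ‖Λ.comp (M.lsmul a)‖ ≤ ‖Λ‖ * ‖M.lsmul a‖ := opNorm_comp_le _ _
          _ ≤ (C * ‖a‖) * ‖Λ‖ := by
              rw [mul_comm]
              exact mul_le_mul_of_nonneg_right (hC a).1 (norm_nonneg _)

variable (A) [IsScalarTower ℂ A A] [SMulCommClass ℂ A A] [CompleteSpace A]

/-- `A` as a Banach bimodule over itself. -/
noncomputable def BBimod.base : BBimod A where
  carrier := A
  lsmul a := ContinuousLinearMap.mul ℂ A a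
  rsmul a := (ContinuousLinearMap.mul ℂ A).flip a
  lsmul_add a b := by ext x; simp [add_mul]
  rsmul_add a b := by ext x; simp [mul_add]
  lsmul_smul c a := by ext x; simp [smul_mul_assoc]
  rsmul_smul c a := by ext x; simp [mul_smul_comm]
  lsmul_mul a b := by ext x; simp [mul_assoc]
  rsmul_mul a b := by ext x; simp [mul_assoc]
  lsmul_rsmul a b := by ext x; simp [mul_assoc]
  bound := by
    refine ⟨1, fun a => ⟨?_, ?_⟩⟩
    · simpa using ContinuousLinearMap.opNorm_mul_apply_le ℂ A a
    · refine le_trans (opNorm_le_bound _ (norm_nonneg a) fun x => ?_) (by simp)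
      simpa [mul_comm] using norm_mul_le x a


/-- The `n`-th dual `A^(n)` of `A` as a Banach `A`-bimodule. -/
noncomputable def iterDual : ℕ → BBimod A
  | 0 => BBimod.base A
  | n + 1 => (iterDual n).dual

variable {A}

/-- `D` is a derivation from `A` into the Banach bimodule `M`. -/
def IsDerivation (M : BBimod A) (D : A →L[ℂ] M.carrier) : Prop :=
  ∀ a b : A, D (a * b) = M.lsmul a (D b) + M.rsmul b (D a)

/-- `D` is an inner derivation. -/
def IsInner (M : BBimod A) (D : A →L[ℂ] M.carrier) : Prop :=
  ∃ x : M.carrier, ∀ a : A, D a = M.lsmul a x - M.rsmul a x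

/-- `D` is approximately inner: there is a net `(x_i)` in `M` with
`D a = lim_i (a·x_i − x_i·a)` for every `a`. -/
def IsApproxInner (M : BBimod A) (D : A →L[ℂ] M.carrier) : Prop :=
  ∃ (ι : Type) (l : Filter ι) (x : ι → M.carrier), l.NeBot ∧
    ∀ a : A, Tendsto (fun i => M.lsmul a (x i) - M.rsmul a (x i)) l (𝓝 (D a))

variable (A)

/-- `A` is weakly amenable. -/
def WeaklyAmenable : Prop :=
  ∀ D : A →L[ℂ] (iterDual A 1).carrier, IsDerivation (iterDual A 1) D → IsInner (iterDual A 1) D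

/-- `A` is approximately `n`-weakly amenable. -/
def ApproxNWeaklyAmenable (n : ℕ) : Prop :=
  ∀ D : A →L[ℂ] (iterDual A n).carrier,
    IsDerivation (iterDual A n) D → IsApproxInner (iterDual A n) D

/-- `A` is `n`-weakly amenable. -/
def NWeaklyAmenable (n : ℕ) : Prop :=
  ∀ D : A →L[ℂ] (iterDual A n).carrier,
    IsDerivation (iterDual A n) D → IsInner (iterDual A n) D

/-- `A` is approximately weakly amenable. -/
def ApproxWeaklyAmenable : Prop := ApproxNWeaklyAmenable A 1

/-- `A` is approximately amenable: every continuous derivation into the dual of a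
Banach `A`-bimodule is approximately inner. -/
def ApproxAmenable : Prop :=
  ∀ (X : BBimod A) (D : A →L[ℂ] X.dual.carrier), IsDerivation X.dual D → IsApproxInner X.dual D

section SecondDual
variable (A : Type) [NonUnitalNormedRing A] [NormedSpace ℂ A]
  [IsScalarTower ℂ A A] [SMulCommClass ℂ A A]

/-- The map `f ↦ n □ f` entering the definition of the first Arens product. -/
noncomputable def arensAux (n : (A →L[ℂ] ℂ) →L[ℂ] ℂ) :
    (A →L[ℂ] ℂ) →L[ℂ] (A →L[ℂ] ℂ) :=
  (compL ℂ A (A →L[ℂ] ℂ) ℂ n).comp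
    (((compL ℂ A (A →L[ℂ] A) (A →L[ℂ] ℂ)).flip (ContinuousLinearMap.mul ℂ A)).comp
      (compL ℂ A A ℂ))

/-- The first Arens product `m □ n` on the second dual of `A`. -/
noncomputable def arens (m n : (A →L[ℂ] ℂ) →L[ℂ] ℂ) : (A →L[ℂ] ℂ) →L[ℂ] ℂ :=
  m.comp (arensAux A n)

variable {A}

lemma arens_add_left (m n p : (A →L[ℂ] ℂ) →L[ℂ] ℂ) :
    arens A (m + n) p = arens A m p + arens A n p := by
  ext f; simp [arens]

lemma arens_add_right (m n p : (A →L[ℂ] ℂ) →L[ℂ] ℂ) :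
    arens A m (n + p) = arens A m n + arens A m p := by
  ext f; simp [arens, arensAux, map_add]

lemma arens_zero_left (m : (A →L[ℂ] ℂ) →L[ℂ] ℂ) : arens A 0 m = 0 := by
  ext f; simp [arens]

lemma arens_zero_right (m : (A →L[ℂ] ℂ) →L[ℂ] ℂ) : arens A m 0 = 0 := by
  ext f
  have h0 : arensAux A (0 : (A →L[ℂ] ℂ) →L[ℂ] ℂ) f = 0 := by ext a; rfl
  show m (arensAux A 0 f) = 0
  rw [h0, map_zero]

lemma arens_smul_left (c : ℂ) (m n : (A →L[ℂ] ℂ) →L[ℂ] ℂ) :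
    arens A (c • m) n = c • arens A m n := by
  ext f; simp [arens]

lemma arens_smul_right (c : ℂ) (m n : (A →L[ℂ] ℂ) →L[ℂ] ℂ) :
    arens A m (c • n) = c • arens A m n := by
  ext f
  have hs : arensAux A (c • n) f = c • arensAux A n f := by ext a; rfl
  show m (arensAux A (c • n) f) = c • m (arensAux A n f)
  rw [hs, map_smul]

lemma arens_assoc (m n p : (A →L[ℂ] ℂ) →L[ℂ] ℂ) :
    arens A (arens A m n) p = arens A m (arens A n p) := by
  ext f
  show m (arensAux A n (arensAux A p f)) = m (arensAux A (arens A n p) f)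
  congr 1
  ext a
  show n ((arensAux A p f).comp (ContinuousLinearMap.mul ℂ A a)) =
    n (arensAux A p (f.comp (ContinuousLinearMap.mul ℂ A a)))
  congr 1
  ext b
  show p (f.comp (ContinuousLinearMap.mul ℂ A (a * b))) =
    p ((f.comp (ContinuousLinearMap.mul ℂ A a)).comp (ContinuousLinearMap.mul ℂ A b))
  congr 1
  ext c
  exact congrArg f (mul_assoc a b c)

lemma arens_norm (m n : (A →L[ℂ] ℂ) →L[ℂ] ℂ) : ‖arens A m n‖ ≤ ‖m‖ * ‖n‖ := by
  have hAux : ‖arensAux A n‖ ≤ ‖n‖ := by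
    refine opNorm_le_bound _ (norm_nonneg n) fun f => ?_
    have hHf : ‖(((compL ℂ A (A →L[ℂ] A) (A →L[ℂ] ℂ)).flip
        (ContinuousLinearMap.mul ℂ A)).comp (compL ℂ A A ℂ)) f‖ ≤ ‖f‖ := by
      refine opNorm_le_bound _ (norm_nonneg f) fun a => ?_
      show ‖f.comp (ContinuousLinearMap.mul ℂ A a)‖ ≤ ‖f‖ * ‖a‖
      calc ‖f.comp (ContinuousLinearMap.mul ℂ A a)‖
          ≤ ‖f‖ * ‖ContinuousLinearMap.mul ℂ A a‖ := opNorm_comp_le _ _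
        _ ≤ ‖f‖ * ‖a‖ :=
            mul_le_mul_of_nonneg_left (ContinuousLinearMap.opNorm_mul_apply_le ℂ A a)
              (norm_nonneg f)
    calc ‖arensAux A n f‖
        ≤ ‖n‖ * ‖(((compL ℂ A (A →L[ℂ] A) (A →L[ℂ] ℂ)).flip
            (ContinuousLinearMap.mul ℂ A)).comp (compL ℂ A A ℂ)) f‖ := opNorm_comp_le _ _
      _ ≤ ‖n‖ * ‖f‖ := mul_le_mul_of_nonneg_left hHf (norm_nonneg n)
  calc ‖arens A m n‖ ≤ ‖m‖ * ‖arensAux A n‖ := opNorm_comp_le _ _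
    _ ≤ ‖m‖ * ‖n‖ := mul_le_mul_of_nonneg_left hAux (norm_nonneg m)

variable (A)

/-- The second dual `A**` of `A`, as a type synonym, equipped with the
first Arens product. -/
def SecondDual : Type := (A →L[ℂ] ℂ) →L[ℂ] ℂ

noncomputable instance : NormedAddCommGroup (SecondDual A) :=
  inferInstanceAs (NormedAddCommGroup ((A →L[ℂ] ℂ) →L[ℂ] ℂ))

noncomputable instance : NonUnitalNormedRing (SecondDual A) :=
  { (inferInstance : NormedAddCommGroup (SecondDual A)) with
    mul := arens A
    left_distrib := fun m n p => arens_add_right m n p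
    right_distrib := fun m n p => arens_add_left m n p
    zero_mul := fun m => arens_zero_left m
    mul_zero := fun m => arens_zero_right m
    mul_assoc := fun m n p => arens_assoc m n p
    norm_mul_le := fun m n => arens_norm m n }

noncomputable instance : NormedSpace ℂ (SecondDual A) :=
  (inferInstance : NormedSpace ℂ ((A →L[ℂ] ℂ) →L[ℂ] ℂ))

instance : CompleteSpace (SecondDual A) :=
  (inferInstance : CompleteSpace ((A →L[ℂ] ℂ) →L[ℂ] ℂ))

instance : IsScalarTower ℂ (SecondDual A) (SecondDual A) :=
  ⟨fun c m n => arens_smul_left c m n⟩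

instance : SMulCommClass ℂ (SecondDual A) (SecondDual A) :=
  ⟨fun c m n => (arens_smul_right c m n).symm⟩

/-- The canonical embedding of `A` into its second dual. -/
noncomputable def canEmb : A →L[ℂ] SecondDual A := ContinuousLinearMap.apply ℂ ℂ

end SecondDual
variable (A : Type) [NonUnitalNormedRing A] [NormedSpace ℂ A]
  [IsScalarTower ℂ A A] [SMulCommClass ℂ A A] [CompleteSpace A]

/-!
Approximate weak amenability makes the products `a * b` span a dense subspace of `A`: a nonzero
`f ∈ A*` killing them gives the derivation `a ↦ f a • f`, and approximate innerness forces
`f a * f a = 0`.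

The ideal hypothesis says that `a • Φ` and `Φ • a` lie in the canonical image of `A` for
`Φ ∈ A**`, and this property passes from a bimodule `M` to `M*`, hence to every `A^(k)`. For a
derivation `D : A → M***` with `M = A^(2m)`, let `P : M*** → M*` be restriction to `M` and
`J : M* → M***` the canonical embedding. Then `D - J P D` is a derivation killing the image of `M`
in `M**`, hence every one-sided translate of an element of `M**`; by density of the products it
vanishes. So `D = J (P D)`, and approximate innerness of the derivation `P D` into `A^(2m+1)`
passes to `D`.
-/

section BanachBimodule

variable {A : Type} [NonUnitalNormedRing A] [NormedSpace ℂ A]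

namespace BBimod

noncomputable instance (M : BBimod A) : FunLike M.dual.carrier M.carrier ℂ :=
  inferInstanceAs (FunLike (M.carrier →L[ℂ] ℂ) M.carrier ℂ)

@[ext]
lemma dual_ext {M : BBimod A} {Λ Λ' : M.dual.carrier} (h : ∀ x, Λ x = Λ' x) : Λ = Λ' :=
  ContinuousLinearMap.ext h

structure Hom (M N : BBimod A) where
  toCLM : M.carrier →L[ℂ] N.carrier
  map_lsmul (a : A) (x : M.carrier) : toCLM (M.lsmul a x) = N.lsmul a (toCLM x)
  map_rsmul (a : A) (x : M.carrier) : toCLM (M.rsmul a x) = N.rsmul a (toCLM x)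

variable {M N : BBimod A}

lemma dual_lsmul_apply (a : A) (Λ : M.dual.carrier) (x : M.carrier) :
    M.dual.lsmul a Λ x = Λ (M.rsmul a x) := rfl

lemma dual_rsmul_apply (a : A) (Λ : M.dual.carrier) (x : M.carrier) :
    M.dual.rsmul a Λ x = Λ (M.lsmul a x) := rfl

noncomputable def Hom.dual (T : Hom M N) : Hom N.dual M.dual where
  toCLM := (compL ℂ M.carrier N.carrier ℂ).flip T.toCLM
  map_lsmul a Λ := by ext x; exact congrArg Λ (T.map_rsmul a x).symm
  map_rsmul a Λ := by ext x; exact congrArg Λ (T.map_lsmul a x).symm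

lemma Hom.dual_apply (T : Hom M N) (Λ : N.dual.carrier) (x : M.carrier) :
    T.dual.toCLM Λ x = Λ (T.toCLM x) := rfl

variable (M) in
noncomputable def bidualEmb : Hom M M.dual.dual where
  toCLM := ContinuousLinearMap.apply ℂ ℂ
  map_lsmul _ _ := rfl
  map_rsmul _ _ := rfl

lemma bidualEmb_apply (x : M.carrier) (Λ : M.dual.carrier) : M.bidualEmb.toCLM x Λ = Λ x := rfl

variable (M) in
def BidualSmulMemRange : Prop :=
  ∀ (a : A) (Φ : M.dual.dual.carrier),
    M.dual.dual.lsmul a Φ ∈ Set.range M.bidualEmb.toCLM ∧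
      M.dual.dual.rsmul a Φ ∈ Set.range M.bidualEmb.toCLM

lemma BidualSmulMemRange.dual (hM : M.BidualSmulMemRange) : M.dual.BidualSmulMemRange := by
  intro a Ξ
  constructor
  · refine ⟨M.dual.lsmul a (M.bidualEmb.dual.toCLM Ξ), dual_ext fun Φ => ?_⟩
    obtain ⟨x, hx⟩ := (hM a Φ).2
    calc Φ (M.dual.lsmul a (M.bidualEmb.dual.toCLM Ξ))
        = M.bidualEmb.toCLM x (M.bidualEmb.dual.toCLM Ξ) := by rw [hx, dual_rsmul_apply]
      _ = M.dual.dual.dual.lsmul a Ξ Φ := by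
        rw [bidualEmb_apply, Hom.dual_apply, hx, dual_lsmul_apply]
  · refine ⟨M.dual.rsmul a (M.bidualEmb.dual.toCLM Ξ), dual_ext fun Φ => ?_⟩
    obtain ⟨x, hx⟩ := (hM a Φ).1
    calc Φ (M.dual.rsmul a (M.bidualEmb.dual.toCLM Ξ))
        = M.bidualEmb.toCLM x (M.bidualEmb.dual.toCLM Ξ) := by rw [hx, dual_lsmul_apply]
      _ = M.dual.dual.dual.rsmul a Ξ Φ := by
        rw [bidualEmb_apply, Hom.dual_apply, hx, dual_rsmul_apply]

end BBimod

open BBimod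

variable {M N : BBimod A} {D D' : A →L[ℂ] M.carrier}

lemma IsDerivation.sub (hD : IsDerivation M D) (hD' : IsDerivation M D') :
    IsDerivation M (D - D') := by
  intro a b
  simp only [sub_apply, hD a b, hD' a b, map_sub]
  abel

lemma IsDerivation.hom_comp (T : Hom M N) (hD : IsDerivation M D) :
    IsDerivation N (T.toCLM.comp D) := by
  intro a b
  simp only [ContinuousLinearMap.comp_apply, hD a b, map_add, T.map_lsmul, T.map_rsmul]

lemma IsApproxInner.hom_comp (T : Hom M N) (hD : IsApproxInner M D) :
    IsApproxInner N (T.toCLM.comp D) := by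
  obtain ⟨ι, l, x, hl, hx⟩ := hD
  refine ⟨ι, l, fun i => T.toCLM (x i), hl, fun a => ?_⟩
  simpa only [Function.comp_def, map_sub, T.map_lsmul, T.map_rsmul, comp_apply] using
    (T.toCLM.continuous.tendsto (D a)).comp (hx a)

lemma IsDerivation.apply_eq_zero_of_translates
    (hA : Dense (Submodule.span ℂ (Set.range fun p : A × A => p.1 * p.2) : Set A))
    {Q : A →L[ℂ] M.dual.carrier} (hQ : IsDerivation M.dual Q) (x : M.carrier)
    (hx : ∀ a b, Q a (M.lsmul b x) = 0 ∧ Q a (M.rsmul b x) = 0) (a : A) : Q a x = 0 := by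
  let evalQ : A →L[ℂ] ℂ := (ContinuousLinearMap.apply ℂ ℂ x).comp Q
  suffices evalQ = 0 from congrArg (fun f : A →L[ℂ] ℂ => f a) this
  refine ContinuousLinearMap.ext_on hA ?_
  rintro _ ⟨⟨b, c⟩, rfl⟩
  calc Q (b * c) x = Q c (M.rsmul b x) + Q b (M.lsmul c x) := by rw [hQ b c]; rfl
    _ = 0 := by rw [(hx c b).2, (hx b c).1, add_zero]


variable (hA : Dense (Submodule.span ℂ (Set.range fun p : A × A => p.1 * p.2) : Set A))
include hA

lemma IsDerivation.eq_bidualEmb_comp (hM : M.BidualSmulMemRange)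
    {D : A →L[ℂ] M.dual.dual.dual.carrier} (hD : IsDerivation _ D) :
    D = M.dual.bidualEmb.toCLM.comp (M.bidualEmb.dual.toCLM.comp D) := by
  set Q := D - M.dual.bidualEmb.toCLM.comp (M.bidualEmb.dual.toCLM.comp D)
  have hQ : IsDerivation _ Q := hD.sub ((hD.hom_comp _).hom_comp _)
  -- `J (P Λ)` and `Λ` agree on the image of `M`, since `P` is restriction to it
  have hQ_bidualEmb (a : A) (x : M.carrier) : Q a (M.bidualEmb.toCLM x) = 0 := sub_self _
  have hQ_eq_zero (a : A) (Φ : M.dual.dual.carrier) : Q a Φ = 0 := by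
    refine hQ.apply_eq_zero_of_translates hA Φ (fun c b => ?_) a
    obtain ⟨⟨x, hx⟩, ⟨y, hy⟩⟩ := hM b Φ
    exact ⟨hx ▸ hQ_bidualEmb c x, hy ▸ hQ_bidualEmb c y⟩
  exact sub_eq_zero.mp (ContinuousLinearMap.ext fun a => dual_ext (hQ_eq_zero a))

lemma isApproxInner_of_bidualSmulMemRange (hM : M.BidualSmulMemRange)
    (h : ∀ D : A →L[ℂ] M.dual.carrier, IsDerivation M.dual D → IsApproxInner M.dual D)
    {D : A →L[ℂ] M.dual.dual.dual.carrier} (hD : IsDerivation _ D) : IsApproxInner _ D := by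
  rw [hD.eq_bidualEmb_comp hA hM]
  exact (h _ (hD.hom_comp _)).hom_comp _

end BanachBimodule

lemma exists_ne_zero_of_not_dense_span {𝕜 E : Type*} [RCLike 𝕜] [NormedAddCommGroup E]
    [NormedSpace 𝕜 E] {s : Set E} (hs : ¬Dense (Submodule.span 𝕜 s : Set E)) :
    ∃ f : E →L[𝕜] 𝕜, f ≠ 0 ∧ ∀ x ∈ s, f x = 0 := by
  set S := (Submodule.span 𝕜 s).topologicalClosure
  have : IsClosed (S : Set E) := Submodule.isClosed_topologicalClosure _
  obtain ⟨x, hx⟩ : ∃ x, x ∉ S := by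
    by_contra! hS
    exact hs (Submodule.dense_iff_topologicalClosure_eq_top.mpr (Submodule.eq_top_iff'.mpr hS))
  have hx' : ‖S.mkQ x‖ ≠ 0 := by simpa [Submodule.Quotient.mk_eq_zero] using hx
  obtain ⟨g, -, hgx⟩ := exists_dual_vector 𝕜 (S.mkQ x) hx'
  refine ⟨g.comp S.mkQL, fun h0 => hx' ?_, fun y hy => ?_⟩
  · have h0x : g (S.mkQ x) = 0 := DFunLike.congr_fun h0 x
    exact_mod_cast hgx.symm.trans h0x
  · have : S.mkQ y = 0 := (Submodule.Quotient.mk_eq_zero S).mpr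
      ((Submodule.span 𝕜 s).le_topologicalClosure (Submodule.subset_span hy))
    simp [this]

section BanachAlgebra

variable {A : Type} [NonUnitalNormedRing A] [NormedSpace ℂ A]
  [IsScalarTower ℂ A A] [SMulCommClass ℂ A A] [CompleteSpace A]

lemma IsApproxInner.apply_self_eq_zero {D : A →L[ℂ] (BBimod.base A).dual.carrier}
    (hD : IsApproxInner _ D) (x : A) : D x x = 0 := by
  obtain ⟨ι, l, w, _, hw⟩ := hD
  have hcomm (i : ι) :
      ((BBimod.base A).dual.lsmul x (w i) - (BBimod.base A).dual.rsmul x (w i)) x = 0 :=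
    sub_self (w i (x * x))
  have := ((ContinuousLinearMap.apply ℂ ℂ x).continuous.tendsto (D x)).comp (hw x)
  exact tendsto_nhds_unique this (tendsto_const_nhds.congr fun i => (hcomm i).symm)

lemma dense_span_mul_of_approxWeaklyAmenable (h : ApproxWeaklyAmenable A) :
    Dense (Submodule.span ℂ (Set.range fun p : A × A => p.1 * p.2) : Set A) := by
  by_contra hA
  obtain ⟨f, hf0, hf⟩ := exists_ne_zero_of_not_dense_span hA
  have hfmul (a b : A) : f (a * b) = 0 := hf _ ⟨(a, b), rfl⟩
  let D : A →L[ℂ] (BBimod.base A).dual.carrier := f.smulRight f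
  have hD : IsDerivation (BBimod.base A).dual D := by
    intro a b
    refine BBimod.dual_ext fun (y : A) => ?_
    show f (a * b) * f y = f b * f (y * a) + f a * f (b * y)
    simp only [hfmul, zero_mul, mul_zero, add_zero]
  have hD0 := (h D hD).apply_self_eq_zero
  exact hf0 (ContinuousLinearMap.ext fun x => mul_self_eq_zero.mp (hD0 x))

variable (hideal : ∀ (a : A) (m : SecondDual A),
      (∃ b : A, canEmb A b = canEmb A a * m) ∧ (∃ b : A, canEmb A b = m * canEmb A a))
include hideal

lemma iterDual_bidualSmulMemRange : ∀ k, (iterDual A k).BidualSmulMemRange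
  -- the actions of `A` on `A**` are Arens products with `canEmb A a`
  | 0 => hideal
  | k + 1 => (iterDual_bidualSmulMemRange k).dual

lemma approxNWeaklyAmenable_two_mul_add_one (h : ApproxWeaklyAmenable A) :
    ∀ m : ℕ, ApproxNWeaklyAmenable A (2 * m + 1)
  | 0 => h
  | m + 1 => fun _ hD =>
    isApproxInner_of_bidualSmulMemRange (dense_span_mul_of_approxWeaklyAmenable h)
      (iterDual_bidualSmulMemRange hideal (2 * m))
      (approxNWeaklyAmenable_two_mul_add_one h m) hD

end BanachAlgebra

theorem approxOddWeaklyAmenable_of_ideal_in_secondDual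
    (h : ApproxWeaklyAmenable A)
    (hideal : ∀ (a : A) (m : SecondDual A),
      (∃ b : A, canEmb A b = canEmb A a * m) ∧ (∃ b : A, canEmb A b = m * canEmb A a)) :
    ∀ n : ℕ, 1 ≤ n → ApproxNWeaklyAmenable A (2 * n - 1) := by
  rintro (_ | m) hn
  · omega
  · rw [show 2 * (m + 1) - 1 = 2 * m + 1 by omega]
    exact approxNWeaklyAmenable_two_mul_add_one hideal h m
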